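/- Let A be an m×n matrix and s ∈ ℕ. If inf over nonzero h ∈ ker(A) of ‖h‖₁/‖h‖₂ > 2√s, then A satisfies the (s,1) null space property: for every nonzero h ∈ ker(A) and every index set T with |T| ≤ s, ‖h_T‖₁ < ‖h_{Tᶜ}‖₁. -/

import Mathlib

/-!
For `h ∈ ker A` nonzero and `|T| ≤ s`, Cauchy–Schwarz gives
`‖h_T‖₁ ≤ √s ‖h‖₂`, while the hypothesis gives `2 √s ‖h‖₂ < ‖h‖₁ = ‖h_T‖₁ + ‖h_{Tᶜ}‖₁`.
-/

open Finset Real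

variable {ι : Type*} [Fintype ι]

lemma sqrt_sum_sq_pos {h : ι → ℝ} (hne : h ≠ 0) : 0 < √(∑ i, h i ^ 2) := by
  refine Real.sqrt_pos.mpr <| (sum_nonneg fun i _ => sq_nonneg (h i)).lt_of_ne' fun hzero => ?_
  simp only [sq, sum_mul_self_eq_zero_iff, mem_univ, true_implies] at hzero
  exact hne (funext hzero)

lemma sum_abs_le_sqrt_card_mul_sqrt_sum_sq (h : ι → ℝ) (T : Finset ι) :
    ∑ i ∈ T, |h i| ≤ √(#T : ℝ) * √(∑ i, h i ^ 2) := by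
  rw [← Real.sqrt_mul (Nat.cast_nonneg _)]
  refine Real.le_sqrt_of_sq_le ?_
  calc (∑ i ∈ T, |h i|) ^ 2 ≤ #T * ∑ i ∈ T, |h i| ^ 2 := sq_sum_le_card_mul_sum_sq
    _ = #T * ∑ i ∈ T, h i ^ 2 := by simp_rw [sq_abs]
    _ ≤ #T * ∑ i, h i ^ 2 := by gcongr; exact subset_univ T

lemma sum_abs_lt_sum_abs_compl_of_sqrt_mul_lt [DecidableEq ι] {s : ℕ} {h : ι → ℝ} {T : Finset ι}
    (hT : #T ≤ s) (hratio : 2 * √(s : ℝ) * √(∑ i, h i ^ 2) < ∑ i, |h i|) :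
    ∑ i ∈ T, |h i| < ∑ i ∈ Tᶜ, |h i| := by
  have hT_le : ∑ i ∈ T, |h i| ≤ √(s : ℝ) * √(∑ i, h i ^ 2) :=
    (sum_abs_le_sqrt_card_mul_sqrt_sum_sq h T).trans <| by gcongr
  linarith [sum_add_sum_compl T fun i => |h i|]

theorem stmt_19 (m n s : ℕ) (A : Matrix (Fin m) (Fin n) ℝ)
    (hinf : ∀ h : Fin n → ℝ, h ≠ 0 → A.mulVec h = 0 →
      (∑ i, |h i|) / Real.sqrt (∑ i, (h i) ^ 2) > 2 * Real.sqrt s) :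
    ∀ h : Fin n → ℝ, h ≠ 0 → A.mulVec h = 0 →
      ∀ T : Finset (Fin n), T.card ≤ s →
        (∑ i ∈ T, |h i|) < ∑ i ∈ Tᶜ, |h i| := by
  intro h hne hker T hT
  have hratio := hinf h hne hker
  rw [gt_iff_lt, lt_div_iff₀ (sqrt_sum_sq_pos hne)] at hratio
  exact sum_abs_lt_sum_abs_compl_of_sqrt_mul_lt hT hratio
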